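/- arXiv:2502.16249 — 4 statements merged into one kernel-verified Lean document; each statement's English description precedes it below -/
import Mathlib

section
/- LION-RNN theorem (equivalence of the bidirectional RNN with full scaled linear attention): for every i with 1 ≤ i ≤ L such that Σ_{j=1}^{L} M_{ij} ⟨q_i, k_j⟩ ≠ 0, the bidirectional RNN output y_i := (y^F_i + y^B_i) / (c^F_i + c^B_i) satisfies y_i = (Σ_{j=1}^{L} M_{ij} ⟨q_i, k_j⟩ v_j) / (Σ_{j=1}^{L} M_{ij} ⟨q_i, k_j⟩); i.e., y_i equals the i-th row of Scale(Q K^⊤ ⊙ M) V, where Scale divides each row of a matrix by its row sum. -/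
/-!
Unrolling the two decayed scans gives `S^F_i = ∑_{j ≤ i} M_{ij} k_j v_jᵀ` and
`S^B_i = ∑_{j ≥ i} M_{ij} k_j v_jᵀ`, so `S^F_i + S^B_i` is the full masked sum with the diagonal
term counted twice; the two half-corrections remove the extra copy. Applying the linear maps
`q_iᵀ ·` and `⟨q_i, ·⟩` turns this into the numerator and the denominator of the attention row.
-/

open Matrix Finset

/-- Bidirectional decay mask: `M i j = ∏_{t=j+1}^{i} λ_t` for `i > j`,
`M i i = 1`, and `M i j = ∏_{t=i+1}^{j} λ_t` for `i < j`. -/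
noncomputable def bidirMask (lam : ℕ → ℝ) (i j : ℕ) : ℝ :=
  if j < i then ∏ t ∈ Finset.Icc (j + 1) i, lam t
  else if i < j then ∏ t ∈ Finset.Icc (i + 1) j, lam t
  else 1

section DecayRecurrence

variable {R M : Type*} [CommSemiring R] [AddCommMonoid M] [Module R M]
  {L : ℕ} {lam : ℕ → R} {w x : ℕ → M}

theorem forward_decay_eq_sum (hx0 : x 0 = 0)
    (hx : ∀ i, 1 ≤ i → i ≤ L → x i = lam i • x (i - 1) + w i) :
    ∀ i ≤ L, x i = ∑ j ∈ Icc 1 i, (∏ t ∈ Icc (j + 1) i, lam t) • w j := by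
  intro i hi
  induction i with
  | zero => simp [hx0]
  | succ n ih =>
    rw [hx (n + 1) (by omega) hi, Nat.add_sub_cancel, ih (by omega),
      sum_Icc_succ_top (by omega), smul_sum, Icc_eq_empty_of_lt (Nat.lt_succ_self _), prod_empty,
      one_smul]
    congr 1
    refine sum_congr rfl fun j hj => ?_
    rw [smul_smul, prod_Icc_succ_top (by simp at hj; omega), mul_comm]

theorem backward_decay_eq_sum (hxL : x L = w L)
    (hx : ∀ i, 1 ≤ i → i < L → x i = lam (i + 1) • x (i + 1) + w i) :
    ∀ i, 1 ≤ i → i ≤ L → x i = ∑ j ∈ Icc i L, (∏ t ∈ Icc (i + 1) j, lam t) • w j := by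
  intro i hi hiL
  refine Nat.decreasingInduction' (fun k hkL hik ih => ?_) hiL (by simp [hxL])
  rw [hx k (by omega) hkL, ih, ← insert_Icc_add_one_left_eq_Icc hkL.le, sum_insert (by simp),
    Icc_eq_empty_of_lt (Nat.lt_succ_self _), prod_empty, one_smul, smul_sum, add_comm]
  congr 1
  refine sum_congr rfl fun j hj => ?_
  rw [smul_smul, ← prod_insert (by simp : k + 1 ∉ Icc (k + 1 + 1) j),
    insert_Icc_add_one_left_eq_Icc (by simp at hj; omega)]

end DecayRecurrence

theorem bidirMask_of_le {lam : ℕ → ℝ} {i j : ℕ} (h : j ≤ i) :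
    bidirMask lam i j = ∏ t ∈ Icc (j + 1) i, lam t := by
  rcases h.lt_or_eq with h | rfl
  · simp [bidirMask, h]
  · simp [bidirMask]

theorem bidirMask_of_lt {lam : ℕ → ℝ} {i j : ℕ} (h : i < j) :
    bidirMask lam i j = ∏ t ∈ Icc (i + 1) j, lam t := by
  simp [bidirMask, h, h.not_gt]

theorem forward_add_backward_eq_sum_bidirMask {M : Type*} [AddCommMonoid M] [Module ℝ M]
    {L : ℕ} {lam : ℕ → ℝ} {w x y : ℕ → M} (hx0 : x 0 = 0)
    (hx : ∀ i, 1 ≤ i → i ≤ L → x i = lam i • x (i - 1) + w i) (hyL : y L = w L)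
    (hy : ∀ i, 1 ≤ i → i < L → y i = lam (i + 1) • y (i + 1) + w i)
    {i : ℕ} (hi : 1 ≤ i) (hiL : i ≤ L) :
    x i + y i = ∑ j ∈ Icc 1 L, bidirMask lam i j • w j + w i := by
  have hsplit : Icc 1 L = Icc 1 i ∪ Icc (i + 1) L := by
    ext j; simp only [mem_Icc, mem_union]; omega
  have hdisj : Disjoint (Icc 1 i) (Icc (i + 1) L) :=
    disjoint_left.2 fun j hj hj' => by simp only [mem_Icc] at hj hj'; omega
  have hlow : ∑ j ∈ Icc 1 i, (∏ t ∈ Icc (j + 1) i, lam t) • w j =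
      ∑ j ∈ Icc 1 i, bidirMask lam i j • w j :=
    sum_congr rfl fun j hj => by rw [bidirMask_of_le (mem_Icc.1 hj).2]
  have hhigh : ∑ j ∈ Icc (i + 1) L, (∏ t ∈ Icc (i + 1) j, lam t) • w j =
      ∑ j ∈ Icc (i + 1) L, bidirMask lam i j • w j :=
    sum_congr rfl fun j hj => by rw [bidirMask_of_lt (mem_Icc.1 hj).1]
  rw [forward_decay_eq_sum hx0 hx i hiL, backward_decay_eq_sum hyL hy i hi hiL,
    ← insert_Icc_add_one_left_eq_Icc hiL, sum_insert (by simp),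
    Icc_eq_empty_of_lt (Nat.lt_succ_self _), prod_empty, one_smul, hsplit, sum_union hdisj,
    hlow, hhigh]
  abel

theorem lion_rnn_full_attention_equivalence_general
    (L d : ℕ)
    (lam : ℕ → ℝ) (q k v : ℕ → (Fin d → ℝ))
    (SF SB : ℕ → Matrix (Fin d) (Fin d) ℝ) (zF zB : ℕ → (Fin d → ℝ))
    (hSF0 : SF 0 = 0)
    (hSF : ∀ i, 1 ≤ i → i ≤ L → SF i = lam i • SF (i - 1) + vecMulVec (k i) (v i))
    (hzF0 : zF 0 = 0)
    (hzF : ∀ i, 1 ≤ i → i ≤ L → zF i = lam i • zF (i - 1) + k i)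
    (hSBL : SB L = vecMulVec (k L) (v L))
    (hSB : ∀ i, 1 ≤ i → i < L → SB i = lam (i + 1) • SB (i + 1) + vecMulVec (k i) (v i))
    (hzBL : zB L = k L)
    (hzB : ∀ i, 1 ≤ i → i < L → zB i = lam (i + 1) • zB (i + 1) + k i)
    (yF yB : ℕ → (Fin d → ℝ)) (cF cB : ℕ → ℝ)
    (hyF : ∀ i, yF i = q i ᵥ* SF i - ((1 / 2) * (q i ⬝ᵥ k i)) • v i)
    (hyB : ∀ i, yB i = q i ᵥ* SB i - ((1 / 2) * (q i ⬝ᵥ k i)) • v i)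
    (hcF : ∀ i, cF i = q i ⬝ᵥ zF i - (1 / 2) * (q i ⬝ᵥ k i))
    (hcB : ∀ i, cB i = q i ⬝ᵥ zB i - (1 / 2) * (q i ⬝ᵥ k i)) :
    ∀ i, 1 ≤ i → i ≤ L →
      (∑ j ∈ Finset.Icc 1 L, bidirMask lam i j * (q i ⬝ᵥ k j)) ≠ 0 →
      (cF i + cB i)⁻¹ • (yF i + yB i) =
        (∑ j ∈ Finset.Icc 1 L, bidirMask lam i j * (q i ⬝ᵥ k j))⁻¹ •
          ∑ j ∈ Finset.Icc 1 L, (bidirMask lam i j * (q i ⬝ᵥ k j)) • v j := by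
  intro i hi hiL _
  have hS := forward_add_backward_eq_sum_bidirMask hSF0 hSF hSBL hSB hi hiL
  have hz := forward_add_backward_eq_sum_bidirMask hzF0 hzF hzBL hzB hi hiL
  have hy : yF i + yB i = ∑ j ∈ Icc 1 L, (bidirMask lam i j * (q i ⬝ᵥ k j)) • v j := by
    have := congrArg (q i ᵥ* ·) hS
    simp only [vecMul_add, vecMul_sum, vecMul_smul, vecMul_vecMulVec, smul_smul] at this
    rw [hyF, hyB]
    linear_combination (norm := module) this
  have hc : cF i + cB i = ∑ j ∈ Icc 1 L, bidirMask lam i j * (q i ⬝ᵥ k j) := by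
    have := congrArg (q i ⬝ᵥ ·) hz
    simp only [dotProduct_add, dotProduct_sum, dotProduct_smul, smul_eq_mul] at this
    rw [hcF, hcB]
    linear_combination this
  rw [hy, hc]

/-- LION-RNN theorem: the bidirectional RNN output
`y_i = (y^F_i + y^B_i) / (c^F_i + c^B_i)` equals the `i`-th row of
`Scale(Q K^⊤ ⊙ M) V`, whenever the full row sum `Σ_j M_{ij} ⟨q_i, k_j⟩` is nonzero. -/
theorem lion_rnn_full_attention_equivalence
    (L d : ℕ) (hL : 0 < L) (hd : 0 < d)
    (lam : ℕ → ℝ) (q k v : ℕ → (Fin d → ℝ))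
    (SF SB : ℕ → Matrix (Fin d) (Fin d) ℝ) (zF zB : ℕ → (Fin d → ℝ))
    (hSF0 : SF 0 = 0)
    (hSF : ∀ i, 1 ≤ i → i ≤ L → SF i = lam i • SF (i - 1) + vecMulVec (k i) (v i))
    (hzF0 : zF 0 = 0)
    (hzF : ∀ i, 1 ≤ i → i ≤ L → zF i = lam i • zF (i - 1) + k i)
    (hSBL : SB L = vecMulVec (k L) (v L))
    (hSB : ∀ i, 1 ≤ i → i < L → SB i = lam (i + 1) • SB (i + 1) + vecMulVec (k i) (v i))
    (hzBL : zB L = k L)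
    (hzB : ∀ i, 1 ≤ i → i < L → zB i = lam (i + 1) • zB (i + 1) + k i)
    (yF yB : ℕ → (Fin d → ℝ)) (cF cB : ℕ → ℝ)
    (hyF : ∀ i, yF i = q i ᵥ* SF i - ((1 / 2) * (q i ⬝ᵥ k i)) • v i)
    (hyB : ∀ i, yB i = q i ᵥ* SB i - ((1 / 2) * (q i ⬝ᵥ k i)) • v i)
    (hcF : ∀ i, cF i = q i ⬝ᵥ zF i - (1 / 2) * (q i ⬝ᵥ k i))
    (hcB : ∀ i, cB i = q i ⬝ᵥ zB i - (1 / 2) * (q i ⬝ᵥ k i)) :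
    ∀ i, 1 ≤ i → i ≤ L →
      (∑ j ∈ Finset.Icc 1 L, bidirMask lam i j * (q i ⬝ᵥ k j)) ≠ 0 →
      (cF i + cB i)⁻¹ • (yF i + yB i) =
        (∑ j ∈ Finset.Icc 1 L, bidirMask lam i j * (q i ⬝ᵥ k j))⁻¹ •
          ∑ j ∈ Finset.Icc 1 L, (bidirMask lam i j * (q i ⬝ᵥ k j)) • v j :=
  lion_rnn_full_attention_equivalence_general L d lam q k v SF SB zF zB hSF0 hSF hzF0 hzF hSBL hSB
    hzBL hzB yF yB cF cB hyF hyB hcF hcB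
end

section
/- LION-d / bidirectional RetNet mapping: if λ_i = λ ∈ ℝ for all i, then for every i the corrected outputs satisfy y^F_i + y^B_i = Σ_{j=1}^{L} λ^{|i−j|} ⟨q_i, k_j⟩ v_j; i.e., the stacked outputs equal (Q K^⊤ ⊙ M) V where M ∈ ℝ^{L×L} has entries M_{ij} = λ^{|i−j|}. -/
open Matrix Finset

lemma vecMul_vecMulVec' {d : ℕ} (q a b : Fin d → ℝ) :
    q ᵥ* vecMulVec a b = (q ⬝ᵥ a) • b := by
  funext j
  simp only [vecMul, dotProduct, vecMulVec_apply, Pi.smul_apply, smul_eq_mul]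
  rw [Finset.sum_mul]
  exact Finset.sum_congr rfl fun x _ => by ring

/-- LION-d / bidirectional RetNet mapping (fixed decay `λ`):
`y^F_i + y^B_i = Σ_{j=1}^{L} λ^{|i-j|} ⟨q_i, k_j⟩ v_j`, i.e. the stacked outputs
equal `(Q K^⊤ ⊙ M) V` with `M_{ij} = λ^{|i-j|}`. -/
theorem lion_d_retnet_mapping
    (L d : ℕ) (hL : 0 < L) (hd : 0 < d)
    (lam : ℝ) (q k v : ℕ → (Fin d → ℝ))
    (SF SB : ℕ → Matrix (Fin d) (Fin d) ℝ)
    (hSF0 : SF 0 = 0)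
    (hSF : ∀ i, 1 ≤ i → i ≤ L → SF i = lam • SF (i - 1) + vecMulVec (k i) (v i))
    (hSBL : SB L = vecMulVec (k L) (v L))
    (hSB : ∀ i, 1 ≤ i → i < L → SB i = lam • SB (i + 1) + vecMulVec (k i) (v i))
    (yF yB : ℕ → (Fin d → ℝ))
    (hyF : ∀ i, yF i = q i ᵥ* SF i - ((1 / 2) * (q i ⬝ᵥ k i)) • v i)
    (hyB : ∀ i, yB i = q i ᵥ* SB i - ((1 / 2) * (q i ⬝ᵥ k i)) • v i) :
    ∀ i, 1 ≤ i → i ≤ L →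
      yF i + yB i =
        ∑ j ∈ Finset.Icc 1 L,
          (lam ^ (Int.natAbs ((i : ℤ) - (j : ℤ))) * (q i ⬝ᵥ k j)) • v j := by
  -- closed forms for SF and SB
  have hSFsum : ∀ i, i ≤ L →
      SF i = ∑ j ∈ Finset.Icc 1 i, lam ^ (i - j) • vecMulVec (k j) (v j) := by
    intro i
    induction i with
    | zero => intro _; simp [hSF0]
    | succ n ih =>
      intro hn
      rw [hSF (n+1) (Nat.le_add_left 1 n) hn]
      simp only [Nat.add_sub_cancel]
      rw [ih (Nat.le_of_succ_le hn)]
      rw [Finset.smul_sum]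
      rw [Finset.sum_Icc_succ_top (Nat.le_add_left 1 n)]
      rw [Nat.sub_self, pow_zero, one_smul]
      congr 1
      apply Finset.sum_congr rfl
      intro j hj
      simp only [Finset.mem_Icc] at hj
      have he : n + 1 - j = (n - j) + 1 := by omega
      rw [he, pow_succ', smul_smul]
  have hSBsum : ∀ m, ∀ i, 1 ≤ i → i ≤ L → L - i ≤ m →
      SB i = ∑ j ∈ Finset.Icc i L, lam ^ (j - i) • vecMulVec (k j) (v j) := by
    intro m
    induction m with
    | zero =>
      intro i h1 h2 h3
      have : i = L := by omega
      subst this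
      simp [hSBL]
    | succ n ih =>
      intro i h1 h2 h3
      rcases eq_or_lt_of_le h2 with he | hlt
      · subst he; simp [hSBL]
      · rw [hSB i h1 hlt, ih (i+1) (by omega) hlt (by omega)]
        rw [Finset.smul_sum]
        have hsplit : Finset.Icc i L = insert i (Finset.Icc (i+1) L) := by
          ext x; simp [Finset.mem_Icc, Finset.mem_insert]; omega
        rw [hsplit, Finset.sum_insert (by simp [Finset.mem_Icc])]
        rw [add_comm, Nat.sub_self, pow_zero, one_smul]
        congr 1
        apply Finset.sum_congr rfl
        intro j hj
        simp only [Finset.mem_Icc] at hj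
        have he : j - i = (j - (i + 1)) + 1 := by omega
        rw [he, pow_succ', smul_smul]
  intro i h1 h2
  rw [hyF i, hyB i, hSFsum i h2, hSBsum (L - i) i h1 h2 le_rfl]
  have hvm : ∀ (s : Finset ℕ) (c : ℕ → ℝ),
      q i ᵥ* (∑ j ∈ s, c j • vecMulVec (k j) (v j)) =
        ∑ j ∈ s, (c j * (q i ⬝ᵥ k j)) • v j := by
    intro s c
    funext x
    simp only [vecMul, dotProduct, Matrix.sum_apply, Pi.smul_apply, smul_eq_mul,
      vecMulVec_apply, Finset.mul_sum, Finset.sum_mul, Finset.sum_apply]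
    rw [Finset.sum_comm]
    exact Finset.sum_congr rfl fun a _ => Finset.sum_congr rfl fun b _ => by
      simp only [Matrix.smul_apply, vecMulVec_apply, smul_eq_mul]; ring
  rw [hvm, hvm]
  have hFcongr : ∀ j ∈ Finset.Icc 1 i,
      (lam ^ (i - j) * (q i ⬝ᵥ k j)) • v j
        = (lam ^ (Int.natAbs ((i : ℤ) - (j : ℤ))) * (q i ⬝ᵥ k j)) • v j := by
    intro j hj
    simp only [Finset.mem_Icc] at hj
    have : Int.natAbs ((i : ℤ) - (j : ℤ)) = i - j := by omega
    rw [this]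
  have hBcongr : ∀ j ∈ Finset.Icc (i+1) L,
      (lam ^ (j - i) * (q i ⬝ᵥ k j)) • v j
        = (lam ^ (Int.natAbs ((i : ℤ) - (j : ℤ))) * (q i ⬝ᵥ k j)) • v j := by
    intro j hj
    simp only [Finset.mem_Icc] at hj
    have : Int.natAbs ((i : ℤ) - (j : ℤ)) = j - i := by omega
    rw [this]
  have hsplitB : Finset.Icc i L = insert i (Finset.Icc (i+1) L) := by
    ext x; simp [Finset.mem_Icc, Finset.mem_insert]; omega
  have hsplitL : Finset.Icc 1 L = Finset.Icc 1 i ∪ Finset.Icc (i+1) L := by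
    ext x; simp [Finset.mem_Icc, Finset.mem_union]; omega
  have hdisj : Disjoint (Finset.Icc 1 i) (Finset.Icc (i+1) L) := by
    rw [Finset.disjoint_left]; intro x hx hx'
    simp only [Finset.mem_Icc] at hx hx'; omega
  rw [hsplitB, Finset.sum_insert (by simp [Finset.mem_Icc]),
      hsplitL, Finset.sum_union hdisj,
      Finset.sum_congr rfl hFcongr, Finset.sum_congr rfl hBcongr]
  have hii : Int.natAbs ((i : ℤ) - (i : ℤ)) = 0 := by omega
  simp only [Nat.sub_self, hii, pow_zero, one_mul]
  module
end

section
/- LION-RNN theorem for diagonal decay (Theorem A.4): for k = 1,…,L let a_k ∈ ℝ^d and Λ_k = diag(a_k). Define the forward states S^F_0 = 0 ∈ ℝ^{d×d}, S^F_i = Λ_i S^F_{i−1} + k_i v_i^⊤, the backward states S^B_L = k_L v_L^⊤, S^B_i = Λ_{i+1} S^B_{i+1} + k_i v_i^⊤ for i < L, and the corrected outputs y^F_i = (q_i^⊤ S^F_i)^⊤ − (1/2)⟨q_i, k_i⟩ v_i and y^B_i = (q_i^⊤ S^B_i)^⊤ − (1/2)⟨q_i, k_i⟩ v_i. Then for every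 i, y^F_i + y^B_i = Σ_{j=1}^{i−1} (q_i^⊤ Λ_i Λ_{i−1} ⋯ Λ_{j+1} k_j) v_j + ⟨q_i, k_i⟩ v_i + Σ_{j=i+1}^{L} (q_i^⊤ Λ_{i+1} ⋯ Λ_j k_j) v_j; in particular the diagonal term ⟨q_i, k_i⟩ v_i is counted exactly once. -/
/-!
Unrolling the two recurrences gives `S^F_i = Σ_{j ≤ i} Λ_i ⋯ Λ_{j+1} k_j v_jᵀ` and
`S^B_i = Σ_{j ≥ i} Λ_{i+1} ⋯ Λ_j k_j v_jᵀ`. Both sums contain the term `j = i` with the empty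
product, so `q_iᵀ S^F_i + q_iᵀ S^B_i` counts `⟨q_i, k_i⟩ v_i` twice, and the two corrections
`½ ⟨q_i, k_i⟩ v_i` remove one copy.
-/

open Matrix Finset

/-- `lamProd a j i = Λ_i Λ_{i-1} ⋯ Λ_{j+1}` where `Λ_t = diag (a t)`;
empty products (when `i ≤ j`) equal the identity. -/
noncomputable def lamProd {d : ℕ} (a : ℕ → Fin d → ℝ) (j : ℕ) :
    ℕ → Matrix (Fin d) (Fin d) ℝ
  | 0 => 1
  | (i + 1) => if i + 1 ≤ j then 1 else Matrix.diagonal (a (i + 1)) * lamProd a j i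

theorem vecMul_mul_vecMulVec {m n p α : Type*} [Fintype m] [Fintype n] [CommSemiring α]
    (x : m → α) (M : Matrix m n α) (y : n → α) (w : p → α) :
    x ᵥ* (M * vecMulVec y w) = ((x ᵥ* M) ⬝ᵥ y) • w := by
  rw [← vecMul_vecMul, vecMul_vecMulVec]

section lamProd

variable {d : ℕ} (a : ℕ → Fin d → ℝ)

theorem lamProd_eq_diagonal_prod (j i : ℕ) :
    lamProd a j i = diagonal (∏ t ∈ Ioc j i, a t) := by
  induction i with
  | zero => simp [lamProd]
  | succ i ih =>
    rw [lamProd]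
    split_ifs with h
    · simp [Ioc_eq_empty_of_le h]
    · rw [ih, diagonal_mul_diagonal, ← Pi.mul_def, prod_Ioc_succ_top (by omega), mul_comm]

theorem lamProd_self (i : ℕ) : lamProd a i i = 1 := by
  simp [lamProd_eq_diagonal_prod]

theorem lamProd_succ_of_le {j i : ℕ} (h : j ≤ i) :
    lamProd a j (i + 1) = diagonal (a (i + 1)) * lamProd a j i := by
  rw [lamProd, if_neg (by omega)]

theorem diagonal_mul_lamProd_succ {i j : ℕ} (h : i < j) :
    diagonal (a (i + 1)) * lamProd a (i + 1) j = lamProd a i j := by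
  rw [lamProd_eq_diagonal_prod, lamProd_eq_diagonal_prod, diagonal_mul_diagonal, ← Pi.mul_def,
    ← prod_Ioc_consecutive _ (Nat.le_succ i) h, Nat.Ioc_succ_singleton, prod_singleton]

variable (k v : ℕ → Fin d → ℝ) (S : ℕ → Matrix (Fin d) (Fin d) ℝ) {L : ℕ}

theorem forward_state_eq_sum (h₀ : S 0 = 0)
    (hS : ∀ i, 1 ≤ i → i ≤ L →
      S i = diagonal (a i) * S (i - 1) + vecMulVec (k i) (v i)) :
    ∀ i ≤ L, S i = ∑ j ∈ Icc 1 i, lamProd a j i * vecMulVec (k j) (v j) := by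
  intro i
  induction i with
  | zero => simp [h₀]
  | succ i ih =>
    intro hi
    rw [hS (i + 1) (by omega) hi, Nat.add_sub_cancel, ih (by omega), mul_sum,
      sum_Icc_succ_top (by omega), lamProd_self, one_mul]
    congr 1
    refine sum_congr rfl fun j hj => ?_
    rw [← mul_assoc, lamProd_succ_of_le a (mem_Icc.mp hj).2]

theorem backward_state_eq_sum (hL : S L = vecMulVec (k L) (v L))
    (hS : ∀ i, 1 ≤ i → i < L →
      S i = diagonal (a (i + 1)) * S (i + 1) + vecMulVec (k i) (v i)) :
    ∀ i, 1 ≤ i → i ≤ L → S i = ∑ j ∈ Icc i L, lamProd a i j * vecMulVec (k j) (v j) := by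
  intro i hi₁ hiL
  refine Nat.decreasingInduction' (fun j hjL hij ih => ?_) hiL ?_
  · rw [hS j (by omega) hjL, ih, mul_sum, ← add_sum_Ioc_eq_sum_Icc hjL.le,
      ← Icc_add_one_left_eq_Ioc, lamProd_self, one_mul, add_comm]
    congr 1
    refine sum_congr rfl fun t ht => ?_
    rw [← mul_assoc, diagonal_mul_lamProd_succ a (mem_Icc.mp ht).1]
  · rw [hL, Icc_self, sum_singleton, lamProd_self, one_mul]

end lamProd

theorem lion_rnn_diagonal_decay_general
    (L d : ℕ)
    (q k v : ℕ → (Fin d → ℝ)) (a : ℕ → (Fin d → ℝ))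
    (SF SB : ℕ → Matrix (Fin d) (Fin d) ℝ)
    (hSF0 : SF 0 = 0)
    (hSF : ∀ i, 1 ≤ i → i ≤ L →
      SF i = Matrix.diagonal (a i) * SF (i - 1) + vecMulVec (k i) (v i))
    (hSBL : SB L = vecMulVec (k L) (v L))
    (hSB : ∀ i, 1 ≤ i → i < L →
      SB i = Matrix.diagonal (a (i + 1)) * SB (i + 1) + vecMulVec (k i) (v i))
    (yF yB : ℕ → (Fin d → ℝ))
    (hyF : ∀ i, yF i = q i ᵥ* SF i - ((1 / 2) * (q i ⬝ᵥ k i)) • v i)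
    (hyB : ∀ i, yB i = q i ᵥ* SB i - ((1 / 2) * (q i ⬝ᵥ k i)) • v i) :
    ∀ i, 1 ≤ i → i ≤ L →
      yF i + yB i =
        (∑ j ∈ Finset.Icc 1 (i - 1), ((q i ᵥ* lamProd a j i) ⬝ᵥ k j) • v j)
        + (q i ⬝ᵥ k i) • v i
        + ∑ j ∈ Finset.Icc (i + 1) L, ((q i ᵥ* lamProd a i j) ⬝ᵥ k j) • v j := by
  intro i hi₁ hiL
  obtain ⟨m, rfl⟩ : ∃ m, i = m + 1 := ⟨i - 1, by omega⟩
  rw [hyF, hyB, forward_state_eq_sum a k v SF hSF0 hSF _ hiL,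
    backward_state_eq_sum a k v SB hSBL hSB _ hi₁ hiL, vecMul_sum, vecMul_sum,
    sum_Icc_succ_top hi₁, ← add_sum_Ioc_eq_sum_Icc hiL, ← Icc_add_one_left_eq_Ioc,
    Nat.add_sub_cancel]
  simp only [vecMul_mul_vecMulVec, lamProd_self, vecMul_one]
  module

/-- LION-RNN theorem for diagonal decay: the corrected bidirectional outputs satisfy
`y^F_i + y^B_i = Σ_{j<i} (q_i^⊤ Λ_i ⋯ Λ_{j+1} k_j) v_j + ⟨q_i, k_i⟩ v_i
+ Σ_{j>i} (q_i^⊤ Λ_{i+1} ⋯ Λ_j k_j) v_j`; in particular the diagonal term is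
counted exactly once. -/
theorem lion_rnn_diagonal_decay
    (L d : ℕ) (hL : 0 < L) (hd : 0 < d)
    (q k v : ℕ → (Fin d → ℝ)) (a : ℕ → (Fin d → ℝ))
    (SF SB : ℕ → Matrix (Fin d) (Fin d) ℝ)
    (hSF0 : SF 0 = 0)
    (hSF : ∀ i, 1 ≤ i → i ≤ L →
      SF i = Matrix.diagonal (a i) * SF (i - 1) + vecMulVec (k i) (v i))
    (hSBL : SB L = vecMulVec (k L) (v L))
    (hSB : ∀ i, 1 ≤ i → i < L →
      SB i = Matrix.diagonal (a (i + 1)) * SB (i + 1) + vecMulVec (k i) (v i))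
    (yF yB : ℕ → (Fin d → ℝ))
    (hyF : ∀ i, yF i = q i ᵥ* SF i - ((1 / 2) * (q i ⬝ᵥ k i)) • v i)
    (hyB : ∀ i, yB i = q i ᵥ* SB i - ((1 / 2) * (q i ⬝ᵥ k i)) • v i) :
    ∀ i, 1 ≤ i → i ≤ L →
      yF i + yB i =
        (∑ j ∈ Finset.Icc 1 (i - 1), ((q i ᵥ* lamProd a j i) ⬝ᵥ k j) • v j)
        + (q i ⬝ᵥ k i) • v i
        + ∑ j ∈ Finset.Icc (i + 1) L, ((q i ᵥ* lamProd a i j) ⬝ᵥ k j) • v j :=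
  lion_rnn_diagonal_decay_general L d q k v a SF SB hSF0 hSF hSBL hSB yF yB hyF hyB
end

section
/- LION-Diagonal full linear attention theorem (Theorem A.3): for k = 1,…,L let a_k ∈ ℝ^d have all entries nonzero and Λ_k = diag(a_k); set m_i = a_1 ⊙ ⋯ ⊙ a_i (forward cumulative products, m_0 = all-ones) and r_i = a_{i+1} ⊙ ⋯ ⊙ a_L (reversed cumulative products, r_L = all-ones). Then the bidirectional outputs y^F_i + y^B_i of the diagonal-decay recurrences satisfy, for every i, y^F_i + y^B_i = Σ_{j=1}^{i} ⟨q_i ⊙ m_i, k_j ⊙ m_j^{∘−1}⟩ v_j + Σ_{j=i+1}^{L} ⟨q_i ⊙ r_i, k_j ⊙ r_j^{∘−1}⟩ v_j; equivalently, the stacked outputs equal (Tril[(Q ⊙ 𝐋^F)(K ⊙ Inv(𝐋^F))^⊤] + Triu₊[(Q ⊙ 𝐋^B)(K ⊙ Inv(𝐋^B))^⊤]) V, where 𝐋^F, 𝐋^B ∈ ℝ^{L×d} have i-th rows m_i and r_i, Inv is the entrywise inverse, Tril keeps the lower-triangular part including the diagonal, and Triu₊ keeps the strictly upper-triangular part,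 so the diagonal is counted exactly once. -/
/-!
Unrolling the forward recurrence gives `S^F_i = Σ_{j ≤ i} diag(a_{j+1} ⊙ ⋯ ⊙ a_i) k_j v_jᵀ`, and the
backward one `S^B_i = Σ_{j ≥ i} diag(a_{i+1} ⊙ ⋯ ⊙ a_j) k_j v_jᵀ`. Since no decay entry vanishes,
these partial products are the quotients `m_i / m_j` and `r_i / r_j` of cumulative products, and
`q ᵥ* diag(w) k vᵀ = ⟨q ⊙ w, k⟩ v` turns the states into the weighted sums. The diagonal term
`j = i` occurs in both unrolled sums with weight one, and the two halved corrections remove one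
copy.
-/

open Matrix Finset

/-- Forward cumulative entrywise product `m_i = a_1 ⊙ a_2 ⊙ ⋯ ⊙ a_i`
(with `m_0` the all-ones vector). -/
noncomputable def mcum {d : ℕ} (a : ℕ → Fin d → ℝ) (i : ℕ) : Fin d → ℝ :=
  fun x => ∏ t ∈ Finset.Icc 1 i, a t x

/-- Reversed cumulative entrywise product `r_i = a_{i+1} ⊙ ⋯ ⊙ a_L`
(with `r_L` the all-ones vector). -/
noncomputable def rcum {d : ℕ} (a : ℕ → Fin d → ℝ) (L i : ℕ) : Fin d → ℝ :=
  fun x => ∏ t ∈ Finset.Icc (i + 1) L, a t x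

section DiagonalRecurrence

variable {n R : Type*} [Fintype n] [DecidableEq n] [CommSemiring R]

theorem eq_sum_diagonal_prod_Ioc_of_forward_recurrence {N : ℕ} {a : ℕ → n → R}
    {B S : ℕ → Matrix n n R} (h0 : S 0 = 0)
    (hS : ∀ i, 1 ≤ i → i ≤ N → S i = diagonal (a i) * S (i - 1) + B i) :
    ∀ i ≤ N, S i = ∑ j ∈ Icc 1 i, diagonal (∏ t ∈ Ioc j i, a t) * B j := by
  intro i hi
  induction i with
  | zero => simp [h0]
  | succ i ih =>
    rw [hS (i + 1) (by omega) hi, Nat.add_sub_cancel, ih (by omega), mul_sum,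
      sum_Icc_succ_top (by omega), Ioc_self, prod_empty, Pi.one_def, diagonal_one, one_mul]
    congr 1
    refine sum_congr rfl fun j hj => ?_
    rw [← Matrix.mul_assoc, diagonal_mul_diagonal, ← Pi.mul_def, mul_comm (a (i + 1)),
      ← prod_Ioc_succ_top (mem_Icc.1 hj).2]

theorem eq_sum_diagonal_prod_Ioc_of_backward_recurrence {N : ℕ} {a : ℕ → n → R}
    {B S : ℕ → Matrix n n R} (hN : S N = B N)
    (hS : ∀ i, 1 ≤ i → i < N → S i = diagonal (a (i + 1)) * S (i + 1) + B i) :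
    ∀ i, 1 ≤ i → i ≤ N → S i = ∑ j ∈ Icc i N, diagonal (∏ t ∈ Ioc i j, a t) * B j := by
  intro i hi hiN
  induction hiN using Nat.decreasingInduction with
  | self => simp [hN]
  | of_succ i hiN ih =>
    rw [hS i hi hiN, ih (by omega), mul_sum, ← insert_Icc_add_one_left_eq_Icc hiN.le,
      sum_insert (by simp), Ioc_self, prod_empty, Pi.one_def, diagonal_one, one_mul, add_comm]
    congr 1
    refine sum_congr rfl fun j hj => ?_
    rw [← Matrix.mul_assoc, diagonal_mul_diagonal, ← Pi.mul_def,
      ← prod_Ioc_consecutive _ (Nat.le_succ i) (mem_Icc.1 hj).1, Nat.Ioc_succ_singleton,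
      prod_singleton]

end DiagonalRecurrence

theorem vecMul_diagonal_mul_vecMulVec {m n R : Type*} [Fintype n] [DecidableEq n]
    [CommSemiring R] (x w u : n → R) (v : m → R) :
    x ᵥ* (diagonal w * vecMulVec u v) = ((x * w) ⬝ᵥ u) • v := by
  rw [← vecMul_vecMul, vecMul_vecMulVec]
  congr 2
  exact funext (vecMul_diagonal x w)

theorem vecMul_sum_diagonal_mul_vecMulVec {ι m n R : Type*} [Fintype n] [DecidableEq n]
    [CommSemiring R] (x : n → R) (s : Finset ι) (w k : ι → n → R) (v : ι → m → R) :
    x ᵥ* ∑ j ∈ s, diagonal (w j) * vecMulVec (k j) (v j) = ∑ j ∈ s, ((x * w j) ⬝ᵥ k j) • v j := by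
  simp only [vecMul_sum, vecMul_diagonal_mul_vecMulVec]

theorem mul_mul_dotProduct_eq_mul_dotProduct_mul {n R : Type*} [Fintype n] [CommSemiring R]
    (x y z u : n → R) :
    (x * (y * z)) ⬝ᵥ u = (x * y) ⬝ᵥ (u * z) := by
  simp only [dotProduct, Pi.mul_apply]
  exact sum_congr rfl fun _ _ => by ring

section CumulativeProducts

variable {d L : ℕ} {a : ℕ → Fin d → ℝ}

theorem mcum_ne_zero (ha : ∀ t x, 1 ≤ t → t ≤ L → a t x ≠ 0) {i : ℕ} (hi : i ≤ L)
    (x : Fin d) : mcum a i x ≠ 0 :=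
  prod_ne_zero_iff.2 fun t ht => ha t x (mem_Icc.1 ht).1 ((mem_Icc.1 ht).2.trans hi)

theorem rcum_ne_zero (ha : ∀ t x, 1 ≤ t → t ≤ L → a t x ≠ 0) (i : ℕ) (x : Fin d) :
    rcum a L i x ≠ 0 :=
  prod_ne_zero_iff.2 fun t ht =>
    ha t x ((Nat.le_add_left 1 i).trans (mem_Icc.1 ht).1) (mem_Icc.1 ht).2

theorem prod_Ioc_eq_mcum_mul_inv {i j : ℕ} (hj : ∀ x, mcum a j x ≠ 0) (hji : j ≤ i) :
    ∏ t ∈ Ioc j i, a t = mcum a i * (mcum a j)⁻¹ := by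
  have hIcc (m : ℕ) : Icc 1 m = Ioc 0 m := Icc_add_one_left_eq_Ioc 0 m
  funext x
  rw [Pi.mul_apply, Pi.inv_apply, eq_mul_inv_iff_mul_eq₀ (hj x), prod_apply, mul_comm, mcum,
    mcum, hIcc, hIcc, prod_Ioc_consecutive _ (Nat.zero_le j) hji]

theorem prod_Ioc_eq_rcum_mul_inv {i j : ℕ} (hj : ∀ x, rcum a L j x ≠ 0) (hij : i ≤ j)
    (hjL : j ≤ L) : ∏ t ∈ Ioc i j, a t = rcum a L i * (rcum a L j)⁻¹ := by
  funext x
  rw [Pi.mul_apply, Pi.inv_apply, eq_mul_inv_iff_mul_eq₀ (hj x), prod_apply, rcum, rcum,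
    Icc_add_one_left_eq_Ioc, Icc_add_one_left_eq_Ioc, prod_Ioc_consecutive _ hij hjL]

end CumulativeProducts

theorem lion_diagonal_full_linear_attention_general
    (L d : ℕ)
    (q k v : ℕ → (Fin d → ℝ)) (a : ℕ → (Fin d → ℝ))
    (ha : ∀ t x, 1 ≤ t → t ≤ L → a t x ≠ 0)
    (SF SB : ℕ → Matrix (Fin d) (Fin d) ℝ)
    (hSF0 : SF 0 = 0)
    (hSF : ∀ i, 1 ≤ i → i ≤ L →
      SF i = Matrix.diagonal (a i) * SF (i - 1) + vecMulVec (k i) (v i))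
    (hSBL : SB L = vecMulVec (k L) (v L))
    (hSB : ∀ i, 1 ≤ i → i < L →
      SB i = Matrix.diagonal (a (i + 1)) * SB (i + 1) + vecMulVec (k i) (v i))
    (yF yB : ℕ → (Fin d → ℝ))
    (hyF : ∀ i, yF i = q i ᵥ* SF i - ((1 / 2) * (q i ⬝ᵥ k i)) • v i)
    (hyB : ∀ i, yB i = q i ᵥ* SB i - ((1 / 2) * (q i ⬝ᵥ k i)) • v i) :
    ∀ i, 1 ≤ i → i ≤ L →
      yF i + yB i =
        (∑ j ∈ Finset.Icc 1 i, ((q i * mcum a i) ⬝ᵥ (k j * (mcum a j)⁻¹)) • v j)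
        + ∑ j ∈ Finset.Icc (i + 1) L,
            ((q i * rcum a L i) ⬝ᵥ (k j * (rcum a L j)⁻¹)) • v j := by
  intro i hi hiL
  have hF : q i ᵥ* SF i =
      ∑ j ∈ Icc 1 i, ((q i * mcum a i) ⬝ᵥ (k j * (mcum a j)⁻¹)) • v j := by
    rw [eq_sum_diagonal_prod_Ioc_of_forward_recurrence hSF0 hSF i hiL,
      vecMul_sum_diagonal_mul_vecMulVec]
    refine sum_congr rfl fun j hj => ?_
    have hji := (mem_Icc.1 hj).2
    rw [prod_Ioc_eq_mcum_mul_inv (mcum_ne_zero ha (hji.trans hiL)) hji,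
      mul_mul_dotProduct_eq_mul_dotProduct_mul]
  have hB : q i ᵥ* SB i = (q i ⬝ᵥ k i) • v i +
      ∑ j ∈ Icc (i + 1) L, ((q i * rcum a L i) ⬝ᵥ (k j * (rcum a L j)⁻¹)) • v j := by
    rw [eq_sum_diagonal_prod_Ioc_of_backward_recurrence hSBL hSB i hi hiL,
      vecMul_sum_diagonal_mul_vecMulVec, ← insert_Icc_add_one_left_eq_Icc hiL,
      sum_insert (by simp), Ioc_self, prod_empty, mul_one]
    congr 1
    refine sum_congr rfl fun j hj => ?_
    obtain ⟨hij, hjL⟩ := mem_Icc.1 hj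
    rw [prod_Ioc_eq_rcum_mul_inv (rcum_ne_zero ha j) (Nat.le_of_succ_le hij) hjL,
      mul_mul_dotProduct_eq_mul_dotProduct_mul]
  rw [hyF, hyB, hF, hB]
  module

/-- LION-Diagonal full linear attention theorem: with nonzero diagonal decays,
the corrected bidirectional outputs satisfy
`y^F_i + y^B_i = Σ_{j≤i} ⟨q_i ⊙ m_i, k_j ⊙ m_j^{∘-1}⟩ v_j
+ Σ_{j>i} ⟨q_i ⊙ r_i, k_j ⊙ r_j^{∘-1}⟩ v_j`, i.e. the stacked outputs equal
`(Tril[(Q ⊙ 𝐋^F)(K ⊙ Inv(𝐋^F))^⊤] + Triu₊[(Q ⊙ 𝐋^B)(K ⊙ Inv(𝐋^B))^⊤]) V`,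
the diagonal being counted exactly once. -/
theorem lion_diagonal_full_linear_attention
    (L d : ℕ) (hL : 0 < L) (hd : 0 < d)
    (q k v : ℕ → (Fin d → ℝ)) (a : ℕ → (Fin d → ℝ))
    (ha : ∀ t x, 1 ≤ t → t ≤ L → a t x ≠ 0)
    (SF SB : ℕ → Matrix (Fin d) (Fin d) ℝ)
    (hSF0 : SF 0 = 0)
    (hSF : ∀ i, 1 ≤ i → i ≤ L →
      SF i = Matrix.diagonal (a i) * SF (i - 1) + vecMulVec (k i) (v i))
    (hSBL : SB L = vecMulVec (k L) (v L))
    (hSB : ∀ i, 1 ≤ i → i < L →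
      SB i = Matrix.diagonal (a (i + 1)) * SB (i + 1) + vecMulVec (k i) (v i))
    (yF yB : ℕ → (Fin d → ℝ))
    (hyF : ∀ i, yF i = q i ᵥ* SF i - ((1 / 2) * (q i ⬝ᵥ k i)) • v i)
    (hyB : ∀ i, yB i = q i ᵥ* SB i - ((1 / 2) * (q i ⬝ᵥ k i)) • v i) :
    ∀ i, 1 ≤ i → i ≤ L →
      yF i + yB i =
        (∑ j ∈ Finset.Icc 1 i, ((q i * mcum a i) ⬝ᵥ (k j * (mcum a j)⁻¹)) • v j)
        + ∑ j ∈ Finset.Icc (i + 1) L,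
            ((q i * rcum a L i) ⬝ᵥ (k j * (rcum a L j)⁻¹)) • v j :=
  lion_diagonal_full_linear_attention_general L d q k v a ha SF SB hSF0 hSF hSBL hSB yF yB hyF hyB
end
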